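/- (Fusion check for the Ashkin–Teller conformal block, c = 1.) For every τ ∈ ℂ with Im τ > 0 and every σ ∈ ℂ: 2^{4σ²}·e^{iπσ²τ} / θ₃(τ) = ∫_{0}^{∞} 2^{4σ² − 4ρ² + 1}·cos(2πσρ) · 2^{4ρ²}·e^{−iπρ²/τ} / θ₃(−1/τ) dρ, where the integral is over real ρ ∈ (0,∞). Equivalently, the Fourier-type kernel F₁(ρ,σ) = 2^{4σ²−4ρ²+1}·cos(2πσρ) intertwines the s- and t-channel Ashkin–Teller conformal blocks in the elliptic parameterization. -/

import Mathlib

open Complex Real MeasureTheory Set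

/-!
The powers of `2` in the integrand multiply to the constant `2 · 2^{4σ²}`, and the rest is even
in `ρ`, so the integral over `(0, ∞)` is half the integral over `ℝ` of `cos (2πσρ) e^{-iπρ²/τ}`.
Splitting the cosine into two exponentials, this is a pair of complex Gaussian integrals, equal
to `(-iτ)^{1/2} e^{iπσ²τ}`. The factor `(-iτ)^{1/2}` is exactly the one produced by the modular
transformation `θ₃(-1/τ) = (-iτ)^{1/2} θ₃(τ)`, and it cancels.
-/

theorem integral_eq_two_nsmul_integral_Ioi_of_even {E : Type*} [NormedAddCommGroup E]
    [NormedSpace ℝ E] {f : ℝ → E} (hf : Integrable f) (heven : ∀ x, f (-x) = f x) :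
    ∫ x, f x = 2 • ∫ x in Ioi (0 : ℝ), f x := by
  rw [← intervalIntegral.integral_Iic_add_Ioi hf.integrableOn hf.integrableOn, two_nsmul]
  congr 1
  calc ∫ x in Iic (0 : ℝ), f x = ∫ x in Iic (0 : ℝ), f (-x) := by simp_rw [heven]
    _ = ∫ x in Ioi (0 : ℝ), f x := by rw [integral_comp_neg_Iic, neg_zero]

-- The `+ 0` puts both exponents in the shape `b x² + c x + d` of `integral_cexp_quadratic`.
theorem cos_mul_cexp_mul_sq_eq_half_add (b c : ℂ) (x : ℝ) :
    cos (c * x) * cexp (b * x ^ 2) =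
      (cexp (b * x ^ 2 + c * I * x + 0) + cexp (b * x ^ 2 + -(c * I) * x + 0)) / 2 := by
  simp only [Complex.cos, div_mul_eq_mul_div, add_mul, ← Complex.exp_add]
  ring_nf

theorem integrable_cos_mul_cexp_mul_sq {b : ℂ} (hb : b.re < 0) (c : ℂ) :
    Integrable fun x : ℝ ↦ cos (c * x) * cexp (b * x ^ 2) := by
  simp_rw [cos_mul_cexp_mul_sq_eq_half_add]
  exact ((integrable_cexp_quadratic' hb _ 0).add (integrable_cexp_quadratic' hb _ 0)).div_const 2

theorem integral_cos_mul_cexp_mul_sq {b : ℂ} (hb : b.re < 0) (c : ℂ) :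
    ∫ x : ℝ, cos (c * x) * cexp (b * x ^ 2) = (π / -b) ^ (1 / 2 : ℂ) * cexp (c ^ 2 / (4 * b)) := by
  simp_rw [cos_mul_cexp_mul_sq_eq_half_add]
  rw [integral_div, integral_add (integrable_cexp_quadratic' hb _ 0)
    (integrable_cexp_quadratic' hb _ 0), integral_cexp_quadratic hb, integral_cexp_quadratic hb]
  rw [neg_sq, mul_pow, I_sq]
  ring_nf

theorem integral_Ioi_cos_mul_cexp_mul_sq {b : ℂ} (hb : b.re < 0) (c : ℂ) :
    ∫ x in Ioi (0 : ℝ), cos (c * x) * cexp (b * x ^ 2) =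
      (π / -b) ^ (1 / 2 : ℂ) * cexp (c ^ 2 / (4 * b)) / 2 := by
  have heven (x : ℝ) :
      cos (c * ↑(-x)) * cexp (b * ↑(-x) ^ 2) = cos (c * x) * cexp (b * x ^ 2) := by
    rw [ofReal_neg, mul_neg, Complex.cos_neg, neg_sq]
  rw [← integral_cos_mul_cexp_mul_sq hb,
    integral_eq_two_nsmul_integral_Ioi_of_even (integrable_cos_mul_cexp_mul_sq hb c) heven,
    two_nsmul]
  ring

theorem jacobiTheta_neg_one_div {τ : ℂ} (hτ : 0 < τ.im) :
    jacobiTheta (-1 / τ) = (-I * τ) ^ (1 / 2 : ℂ) * jacobiTheta τ := by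
  have h := jacobiTheta_S_smul ⟨τ, hτ⟩
  rw [UpperHalfPlane.modular_S_smul] at h
  simpa [neg_div, inv_neg] using h

theorem cpow_two_sub_add_cpow_two (s r : ℂ) :
    (2 : ℂ) ^ (s - r + 1) * (2 : ℂ) ^ r = 2 * (2 : ℂ) ^ s := by
  rw [← cpow_add _ _ two_ne_zero, show s - r + 1 + r = s + 1 by ring, cpow_add _ _ two_ne_zero,
    cpow_one, mul_comm]

theorem ashkin_teller_fusion (τ σ : ℂ) (hτ : 0 < τ.im) :
    (2 : ℂ) ^ (4 * σ ^ 2) * Complex.exp (I * (π : ℂ) * σ ^ 2 * τ) / jacobiTheta τ =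
    ∫ ρ : ℝ in Set.Ioi (0 : ℝ),
      (2 : ℂ) ^ (4 * σ ^ 2 - 4 * (ρ : ℂ) ^ 2 + 1) * Complex.cos (2 * (π : ℂ) * σ * (ρ : ℂ)) *
        ((2 : ℂ) ^ (4 * (ρ : ℂ) ^ 2) * Complex.exp (-I * (π : ℂ) * (ρ : ℂ) ^ 2 / τ) /
          jacobiTheta (-1 / τ)) := by
  have hτ0 : τ ≠ 0 := by rintro rfl; simp at hτ
  have hb : (-I * π / τ).re < 0 := by
    simpa [div_re] using div_neg_of_neg_of_pos (mul_neg_of_neg_of_pos (neg_neg_of_pos pi_pos) hτ)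
      (normSq_pos.mpr hτ0)
  have hintegrand (ρ : ℝ) :
      (2 : ℂ) ^ (4 * σ ^ 2 - 4 * (ρ : ℂ) ^ 2 + 1) * cos (2 * π * σ * ρ) *
        ((2 : ℂ) ^ (4 * (ρ : ℂ) ^ 2) * cexp (-I * π * ρ ^ 2 / τ) / jacobiTheta (-1 / τ)) =
      2 * 2 ^ (4 * σ ^ 2) / jacobiTheta (-1 / τ) *
        (cos (2 * π * σ * ρ) * cexp (-I * π / τ * ρ ^ 2)) := by
    rw [← cpow_two_sub_add_cpow_two (4 * σ ^ 2) (4 * (ρ : ℂ) ^ 2)]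
    ring_nf
  have hscale : (π : ℂ) / -(-I * π / τ) = -I * τ := by
    field_simp
    linear_combination I_sq
  have hphase : (2 * π * σ) ^ 2 / (4 * (-I * π / τ)) = I * π * σ ^ 2 * τ := by
    field_simp
    linear_combination -4 * σ ^ 2 * I_sq
  simp_rw [hintegrand]
  rw [integral_const_mul, integral_Ioi_cos_mul_cexp_mul_sq hb, hscale, hphase,
    jacobiTheta_neg_one_div hτ]
  field_simp
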